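/- The rational group algebra of the alternating group A₄ decomposes as a product of three simple algebras: there is an isomorphism of ℚ-algebras ℚ[A₄] ≅ ℚ × ℚ(θ) × Mat₃(ℚ), where ℚ(θ) is the third cyclotomic field (θ a primitive cube root of unity) and Mat₃(ℚ) is the algebra of 3×3 rational matrices. -/

import Mathlib

/-!
The trivial representation, the character `A₄ → A₄ / V₄ ≅ μ₃ ⊆ ℚ(ζ₃)` and the permutation
action on the sum-zero hyperplane of `ℚ⁴` give an algebra map `ℚ[A₄] → ℚ × ℚ(ζ₃) × M₃(ℚ)`.
Each component is onto (`ζ₃` generates `ℚ(ζ₃)`; Schur orthogonality writes every matrix unit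
as a combination of the `ρ(g)`), and the averaging idempotents over `A₄` and over `V₄` separate
the components, so the map is onto. Both sides have dimension `12 = 1 + 2 + 9`.
-/

abbrev A4 : Type := alternatingGroup (Fin 4)

open Function MonoidAlgebra

theorem AlgHom.surjective_prod {R A B C : Type*} [CommSemiring R] [Ring A] [Ring B] [Ring C]
    [Algebra R A] [Algebra R B] [Algebra R C] {f : A →ₐ[R] B} {g : A →ₐ[R] C}
    (hf : Surjective f) (hg : Surjective g) {e : A} (hfe : f e = 1) (hge : g e = 0) :
    Surjective (f.prod g) := by
  rintro ⟨b, c⟩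
  obtain ⟨x, rfl⟩ := hf b
  obtain ⟨y, rfl⟩ := hg c
  exact ⟨e * x + (1 - e) * y, by simp [hfe, hge]⟩

theorem Matrix.subalgebra_eq_top_of_single_one_mem {R n : Type*} [CommSemiring R] [Fintype n]
    [DecidableEq n] {S : Subalgebra R (Matrix n n R)} (h : ∀ i j, Matrix.single i j 1 ∈ S) :
    S = ⊤ := by
  refine eq_top_iff.2 fun x _ => ?_
  rw [Matrix.matrix_eq_sum_single x]
  refine sum_mem fun i _ => sum_mem fun j _ => ?_
  simpa [Matrix.smul_single] using S.smul_mem (h i j) (x i j)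

namespace MonoidAlgebra

variable {k G : Type*}

theorem lift_smul_sum_of [CommSemiring k] [Monoid G] {A : Type*} [Semiring A] [Algebra k A]
    (f : G →* A) (c : k) (s : Finset G) :
    lift k A G f (c • ∑ g ∈ s, of k G g) = c • ∑ g ∈ s, f g := by
  simp only [map_smul, map_sum, lift_of]

theorem lift_surjective_of_isPrimitiveRoot [CommRing k] [Monoid G] {K : Type*} [CommRing K]
    [IsDomain K] [Algebra k K] {n : ℕ} [NeZero n] [IsCyclotomicExtension {n} k K] (χ : G →* K)
    {g : G} (hg : IsPrimitiveRoot (χ g) n) : Surjective (lift k K G χ) := by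
  rw [← AlgHom.range_eq_top, eq_top_iff, ← IsCyclotomicExtension.adjoin_primitive_root_eq_top hg,
    Algebra.adjoin_le_iff, Set.singleton_subset_iff]
  exact ⟨of k G g, lift_of χ g⟩

theorem lift_surjective_of_orthogonality [Field k] [Group G] [Fintype G] {n : Type*} [Fintype n]
    [DecidableEq n] (ρ : G →* Matrix n n k) {c : k} (hc : c ≠ 0)
    (hρ : ∀ i j, ∑ g, ρ g⁻¹ j i • ρ g = c • Matrix.single i j 1) :
    Surjective (lift k (Matrix n n k) G ρ) := by
  refine (AlgHom.range_eq_top _).1 (Matrix.subalgebra_eq_top_of_single_one_mem fun i j => ?_)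
  exact ⟨c⁻¹ • ∑ g, ρ g⁻¹ j i • of k G g, by simp [hρ, hc]⟩

end MonoidAlgebra

namespace A4

open Equiv Matrix

instance : IsCyclotomicExtension {3} ℚ (CyclotomicField 3 ℚ) :=
  CyclotomicField.isCyclotomicExtension 3 ℚ

theorem card_eq : Fintype.card A4 = 12 := rfl

def threeCycle : A4 := ⟨c[0, 1, 2], Perm.mem_alternatingGroup.2 (by decide)⟩

def kleinFour : Finset A4 := {g | g ^ 2 = 1}

theorem card_kleinFour : kleinFour.card = 4 := by decide

/-- The isomorphism `A₄ / V₄ ≅ ℤ/3` sending the coset of `threeCycle` to `1`. -/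
def toZMod3 : A4 →* Multiplicative (ZMod 3) :=
  MonoidHom.mk' (fun g => .ofAdd <|
    if g ∈ kleinFour then 0 else if g * threeCycle⁻¹ ∈ kleinFour then 1 else 2) (by decide)

noncomputable def cubicChar : A4 →* CyclotomicField 3 ℚ :=
  (AddChar.zmodChar 3
    (IsCyclotomicExtension.zeta_spec 3 ℚ (CyclotomicField 3 ℚ)).pow_eq_one).toMonoidHom.comp
    toZMod3

theorem isPrimitiveRoot_cubicChar_threeCycle : IsPrimitiveRoot (cubicChar threeCycle) 3 := by
  have h : toZMod3 threeCycle = .ofAdd 1 := by decide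
  simp [cubicChar, h, AddChar.zmodChar_apply, show (1 : ZMod 3).val = 1 from rfl]

theorem cubicChar_ne_one : cubicChar ≠ 1 := fun h =>
  isPrimitiveRoot_cubicChar_threeCycle.ne_one (by norm_num) (by rw [h, MonoidHom.one_apply])

theorem cubicChar_eq_one_of_mem {g : A4} (hg : g ∈ kleinFour) : cubicChar g = 1 := by
  simp [cubicChar, toZMod3, hg]

/-- The matrix of `g` acting on the sum-zero hyperplane of `ℤ⁴`, in the basis `e j - e 3`. -/
def stdRepInt : A4 →* Matrix (Fin 3) (Fin 3) ℤ where
  toFun g := Matrix.of fun i j => (if (g : Perm (Fin 4)) j.castSucc = i.castSucc then 1 else 0) -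
    (if (g : Perm (Fin 4)) (Fin.last 3) = i.castSucc then 1 else 0)
  map_one' := by decide
  map_mul' := by decide

def stdRep : A4 →* Matrix (Fin 3) (Fin 3) ℚ :=
  (Int.castRingHom ℚ).mapMatrix.toMonoidHom.comp stdRepInt

theorem sum_stdRep : ∑ g, stdRep g = 0 := by
  have h : ∑ g, stdRepInt g = 0 := by decide
  change ∑ g, (Int.castRingHom ℚ).mapMatrix (stdRepInt g) = 0
  rw [← map_sum, h, map_zero]

theorem sum_kleinFour_stdRep : ∑ g ∈ kleinFour, stdRep g = 0 := by
  have h : ∑ g ∈ kleinFour, stdRepInt g = 0 := by decide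
  change ∑ g ∈ kleinFour, (Int.castRingHom ℚ).mapMatrix (stdRepInt g) = 0
  rw [← map_sum, h, map_zero]

/-- Schur orthogonality for the absolutely irreducible `stdRep`: the constant is `|A₄| / 3`. -/
theorem stdRep_orthogonality (i j : Fin 3) :
    ∑ g, stdRep g⁻¹ j i • stdRep g = (4 : ℚ) • single i j 1 := by
  have h : ∀ i j, ∑ g, stdRepInt g⁻¹ j i • stdRepInt g = 4 • single i j 1 := by decide
  change ∑ g, ((stdRepInt g⁻¹ j i : ℤ) : ℚ) • (Int.castRingHom ℚ).mapMatrix (stdRepInt g) = _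
  simp_rw [Int.cast_smul_eq_zsmul, ← map_zsmul, ← map_sum, h i j, map_nsmul,
    RingHom.mapMatrix_apply, Matrix.map_single, map_one, ofNat_smul_eq_nsmul]

noncomputable def wedderburnHom :
    MonoidAlgebra ℚ A4 →ₐ[ℚ] ℚ × CyclotomicField 3 ℚ × Matrix (Fin 3) (Fin 3) ℚ :=
  (lift ℚ ℚ A4 1).prod ((lift ℚ _ A4 cubicChar).prod (lift ℚ _ A4 stdRep))

theorem wedderburnHom_surjective : Surjective wedderburnHom := by
  have hχ : Surjective (lift ℚ _ A4 cubicChar) :=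
    lift_surjective_of_isPrimitiveRoot _ isPrimitiveRoot_cubicChar_threeCycle
  have hρ : Surjective (lift ℚ _ A4 stdRep) :=
    lift_surjective_of_orthogonality _ four_ne_zero stdRep_orthogonality
  refine AlgHom.surjective_prod (fun c => ⟨algebraMap ℚ _ c, AlgHom.commutes _ c⟩)
    (AlgHom.surjective_prod hχ hρ (e := (4 : ℚ)⁻¹ • ∑ g ∈ kleinFour, of ℚ A4 g) ?_ ?_)
    (e := (12 : ℚ)⁻¹ • ∑ g, of ℚ A4 g) ?_ ?_
  · rw [lift_smul_sum_of, Finset.sum_congr rfl fun g hg => cubicChar_eq_one_of_mem hg,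
      Finset.sum_const, card_kleinFour, ← Nat.cast_smul_eq_nsmul ℚ, smul_smul]
    norm_num
  · rw [lift_smul_sum_of, sum_kleinFour_stdRep, smul_zero]
  · rw [lift_smul_sum_of]
    simp [card_eq]
  · simp only [AlgHom.prod_apply, lift_smul_sum_of, sum_hom_units_eq_zero _ cubicChar_ne_one,
      sum_stdRep, smul_zero, Prod.mk_zero_zero]

theorem finrank_monoidAlgebra : Module.finrank ℚ (MonoidAlgebra ℚ A4) = 12 := by
  simp [(MonoidAlgebra.coeffLinearEquiv ℚ).finrank_eq, card_eq]

theorem finrank_wedderburn :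
    Module.finrank ℚ (ℚ × CyclotomicField 3 ℚ × Matrix (Fin 3) (Fin 3) ℚ) = 12 := by
  have hK : Module.finrank ℚ (CyclotomicField 3 ℚ) = 2 :=
    (IsCyclotomicExtension.finrank (n := 3) _ (Polynomial.cyclotomic.irreducible_rat
      (by norm_num))).trans (Nat.totient_prime Nat.prime_three)
  simp [Module.finrank_prod, hK, Module.finrank_matrix]

end A4

/-- The rational group algebra of `A₄` decomposes as
`ℚ[A₄] ≅ ℚ × ℚ(θ) × Mat₃(ℚ)`, where `ℚ(θ)` is the third cyclotomic field. -/
theorem rat_group_algebra_A4_iso :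
    Nonempty (MonoidAlgebra ℚ A4 ≃ₐ[ℚ]
      ℚ × CyclotomicField 3 ℚ × Matrix (Fin 3) (Fin 3) ℚ) := by
  have hinj : Injective A4.wedderburnHom.toLinearMap :=
    (LinearMap.injective_iff_surjective_of_finrank_eq_finrank
      (A4.finrank_monoidAlgebra.trans A4.finrank_wedderburn.symm)).2 A4.wedderburnHom_surjective
  exact ⟨AlgEquiv.ofBijective A4.wedderburnHom ⟨hinj, A4.wedderburnHom_surjective⟩⟩
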